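/- Let μ be the Lie bracket on ℝ^7 with nonzero basis brackets [e1,e2]=e4, [e1,e4]=e5, [e1,e5]=e6, [e1,e6]=e7, [e2,e3]=e5+e7, [e3,e4]=-e6, [e3,e5]=-e7. Then φ = diag(0,1,0,1,1,1,1) is a derivation of (ℝ^7,μ) and φ is pre-Einstein, i.e. trace(φ∘ψ) = trace(ψ) for every derivation ψ of (ℝ^7,μ). -/

import Mathlib

open Finset

noncomputable section

/-- `ℝ⁷` with its standard basis and standard inner product. -/
abbrev V7 : Type := Fin 7 → ℝ

/-- The standard basis vector `e i`. -/
def e (i : Fin 7) : V7 := Pi.single i 1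

/-- The standard inner product on `ℝ⁷`. -/
def dot (x y : V7) : ℝ := ∑ i, x i * y i

/-- Structure constants built from a list of entries `(i, j, k, a)`, each meaning that
`μ (e i) (e j)` has component `a` along `e k` (and `μ (e j) (e i)` has component `-a`);
all unlisted basis brackets are `0`. -/
def toC (L : List (Fin 7 × Fin 7 × Fin 7 × ℝ)) (i j k : Fin 7) : ℝ :=
  (L.map fun t =>
      (if t.1 = i ∧ t.2.1 = j ∧ t.2.2.1 = k then t.2.2.2 else 0)
    - (if t.1 = j ∧ t.2.1 = i ∧ t.2.2.1 = k then t.2.2.2 else 0)).sum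

/-- The bilinear skew-symmetric map on `ℝ⁷` with structure constants `c`. -/
def br (c : Fin 7 → Fin 7 → Fin 7 → ℝ) (x y : V7) : V7 :=
  fun k => ∑ i, ∑ j, x i * y j * c i j k

lemma br_add_left (c : Fin 7 → Fin 7 → Fin 7 → ℝ) (x x' y : V7) :
    br c (x + x') y = br c x y + br c x' y := by
  funext k
  simp only [br, Pi.add_apply, ← Finset.sum_add_distrib]
  exact Finset.sum_congr rfl fun i _ => Finset.sum_congr rfl fun j _ => by ring

lemma br_smul_left (c : Fin 7 → Fin 7 → Fin 7 → ℝ) (r : ℝ) (x y : V7) :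
    br c (r • x) y = r • br c x y := by
  funext k
  simp only [br, Pi.smul_apply, smul_eq_mul, Finset.mul_sum]
  exact Finset.sum_congr rfl fun i _ => Finset.sum_congr rfl fun j _ => by ring

lemma br_add_right (c : Fin 7 → Fin 7 → Fin 7 → ℝ) (x y y' : V7) :
    br c x (y + y') = br c x y + br c x y' := by
  funext k
  simp only [br, Pi.add_apply, ← Finset.sum_add_distrib]
  exact Finset.sum_congr rfl fun i _ => Finset.sum_congr rfl fun j _ => by ring

lemma br_smul_right (c : Fin 7 → Fin 7 → Fin 7 → ℝ) (r : ℝ) (x y : V7) :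
    br c x (r • y) = r • br c x y := by
  funext k
  simp only [br, Pi.smul_apply, smul_eq_mul, Finset.mul_sum]
  exact Finset.sum_congr rfl fun i _ => Finset.sum_congr rfl fun j _ => by ring

lemma br_zero_left (c : Fin 7 → Fin 7 → Fin 7 → ℝ) (y : V7) : br c 0 y = 0 := by
  funext k; simp [br]

lemma br_zero_right (c : Fin 7 → Fin 7 → Fin 7 → ℝ) (x : V7) : br c x 0 = 0 := by
  funext k; simp [br]

/-- The space of derivations of the algebra `(ℝ⁷, br c)`, i.e. the linear maps `D` with
`D (μ x y) = μ (D x) y + μ x (D y)` for all `x, y`, as a submodule of the endomorphisms. -/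
def derivations (c : Fin 7 → Fin 7 → Fin 7 → ℝ) : Submodule ℝ (Module.End ℝ V7) where
  carrier := {D | ∀ x y, D (br c x y) = br c (D x) y + br c x (D y)}
  add_mem' := by
    intro D E hD hE x y
    simp only [LinearMap.add_apply, hD x y, hE x y, br_add_left, br_add_right]
    abel
  zero_mem' := by
    intro x y
    simp [br_zero_left, br_zero_right]
  smul_mem' := by
    intro r D hD x y
    simp only [LinearMap.smul_apply, hD x y, smul_add, br_smul_left, br_smul_right]

/-- The Jacobi identity for the bracket `br c`. -/
def Jacobi (c : Fin 7 → Fin 7 → Fin 7 → ℝ) : Prop :=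
  ∀ x y z : V7, br c (br c x y) z + br c (br c y z) x + br c (br c z x) y = 0

/-- Skew-symmetry of the bracket `br c`. -/
def Skew (c : Fin 7 → Fin 7 → Fin 7 → ℝ) : Prop :=
  ∀ x y : V7, br c x y = - br c y x

/-- The diagonal endomorphism `diag (a 1, …, a 7)` of `ℝ⁷`, `e i ↦ a i • e i`. -/
def diagL (a : Fin 7 → ℝ) : Module.End ℝ V7 :=
  LinearMap.pi fun i => a i • LinearMap.proj i

/-- Structure constants of the bracket with nonzero basis brackets
`[e1,e2]=e4, [e1,e4]=e5, [e1,e5]=e6, [e1,e6]=e7, [e2,e3]=e5+e7, [e3,e4]=-e6, [e3,e5]=-e7`. -/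
def c2 : Fin 7 → Fin 7 → Fin 7 → ℝ :=
  toC [(0, 1, 3, (1:ℝ)),
   (0, 3, 4, 1),
   (0, 4, 5, 1),
   (0, 5, 6, 1),
   (1, 2, 4, 1),
   (1, 2, 6, 1),
   (2, 3, 5, -1),
   (2, 4, 6, -1)]
/-!
Expanding the structure constants gives the bracket in closed form (`br_c2_eq`), so skew-symmetry,
the Jacobi identity and the derivation property of `φ` are polynomial identities.

Indices count from `0` here. For a derivation `ψ` with matrix entries `d i j = ψ (e j) i`, we have
`trace (φ ∘ ψ) = trace ψ - d 0 0 - d 2 2`. Along the chain `[e0,e1] = e3`, `[e0,e3] = e4`,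
`[e0,e4] = e5`, `[e0,e5] = e6` the derivation equations give `d k k` in terms of `d 0 0` and `d 1 1`,
and then the `e4`- and `e6`-components of `ψ [e1,e2] = ψ (e4 + e6)` yield `d 2 2 = 2 d 0 0` and
`d 2 2 = 4 d 0 0`; hence `d 0 0 = d 2 2 = 0`.
-/

lemma diagL_apply (a v : V7) (k : Fin 7) : diagL a v k = a k * v k := rfl

lemma trace_eq_sum_apply_e (f : Module.End ℝ V7) : LinearMap.trace ℝ V7 f = ∑ i, f (e i) i := by
  rw [LinearMap.trace_eq_matrix_trace ℝ (Pi.basisFun ℝ (Fin 7)), LinearMap.toMatrix_eq_toMatrix']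
  rfl

lemma trace_diagL_comp (a : V7) (f : Module.End ℝ V7) :
    LinearMap.trace ℝ V7 (diagL a ∘ₗ f) = ∑ i, a i * f (e i) i := by
  simp [trace_eq_sum_apply_e, diagL_apply]

lemma br_c2_eq (x y : V7) : br c2 x y =
    ![0, 0, 0,
      x 0 * y 1 - x 1 * y 0,
      x 0 * y 3 - x 3 * y 0 + (x 1 * y 2 - x 2 * y 1),
      x 0 * y 4 - x 4 * y 0 - (x 2 * y 3 - x 3 * y 2),
      x 0 * y 5 - x 5 * y 0 + (x 1 * y 2 - x 2 * y 1) - (x 2 * y 4 - x 4 * y 2)] := by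
  funext k
  fin_cases k <;> simp [br, c2, toC, Fin.sum_univ_seven] <;> ring

lemma skew_c2 : Skew c2 := by
  intro x y
  funext k
  fin_cases k <;> simp [br_c2_eq] <;> ring

lemma jacobi_c2 : Jacobi c2 := by
  intro x y z
  funext k
  fin_cases k <;> simp [br_c2_eq] <;> ring

lemma diagL_mem_derivations_c2 : diagL ![0, 1, 0, 1, 1, 1, 1] ∈ derivations c2 := by
  intro x y
  funext k
  fin_cases k <;> simp [br_c2_eq, diagL_apply] <;> ring

lemma br_c2_basis :
    br c2 (e 0) (e 1) = e 3 ∧ br c2 (e 0) (e 3) = e 4 ∧ br c2 (e 0) (e 4) = e 5 ∧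
      br c2 (e 0) (e 5) = e 6 ∧ br c2 (e 1) (e 2) = e 4 + e 6 := by
  refine ⟨?_, ?_, ?_, ?_, ?_⟩ <;> funext k <;> fin_cases k <;> simp [br_c2_eq, e]

lemma apply_e_zero_zero_and_apply_e_two_two_of_mem_derivations_c2 {ψ : Module.End ℝ V7}
    (hψ : ψ ∈ derivations c2) : ψ (e 0) 0 = 0 ∧ ψ (e 2) 2 = 0 := by
  obtain ⟨b01, b03, b04, b05, b12⟩ := br_c2_basis
  have h01 := congrFun (b01 ▸ hψ (e 0) (e 1))
  have h03 := congrFun (b03 ▸ hψ (e 0) (e 3))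
  have h04 := congrFun (b04 ▸ hψ (e 0) (e 4))
  have h05 := congrFun (b05 ▸ hψ (e 0) (e 5))
  have h12 := congrFun (b12 ▸ hψ (e 1) (e 2))
  have d33 : ψ (e 3) 3 = ψ (e 0) 0 + ψ (e 1) 1 := by simpa [br_c2_eq, e] using h01 3
  have d44 : ψ (e 4) 4 = ψ (e 0) 0 + ψ (e 3) 3 := by simpa [br_c2_eq, e] using h03 4
  have d55 : ψ (e 5) 5 = ψ (e 0) 0 + ψ (e 4) 4 := by simpa [br_c2_eq, e] using h04 5
  have d66 : ψ (e 6) 6 = ψ (e 0) 0 + ψ (e 5) 5 := by simpa [br_c2_eq, e] using h05 6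
  have d14 : ψ (e 4) 1 = 0 := by simpa [br_c2_eq, e] using h03 1
  have d35 : ψ (e 5) 3 = ψ (e 4) 1 := by simpa [br_c2_eq, e] using h04 3
  have d46 : ψ (e 6) 4 = ψ (e 5) 3 := by simpa [br_c2_eq, e] using h05 4
  have d53 : ψ (e 3) 5 = ψ (e 1) 4 := by simpa [br_c2_eq, e] using h01 5
  have d64 : ψ (e 4) 6 = ψ (e 3) 5 := by simpa [br_c2_eq, e] using h03 6
  have d44_add_d46 : ψ (e 4) 4 + ψ (e 6) 4 = ψ (e 1) 1 + ψ (e 2) 2 := by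
    simpa [br_c2_eq, e] using h12 4
  have d64_add_d66 : ψ (e 4) 6 + ψ (e 6) 6 = ψ (e 1) 1 + ψ (e 1) 4 + ψ (e 2) 2 := by
    simpa [br_c2_eq, e] using h12 6
  constructor <;> linarith

/-- The bracket satisfies the Jacobi identity (and is skew-symmetric), `φ` is a derivation
of it, and `φ` is pre-Einstein: `trace (φ ∘ ψ) = trace ψ` for every derivation `ψ`. -/
theorem stmt :
    Skew c2 ∧ Jacobi c2 ∧
    diagL ![0, 1, 0, 1, 1, 1, 1] ∈ derivations c2 ∧
    ∀ ψ ∈ derivations c2,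
      LinearMap.trace ℝ V7 (diagL ![0, 1, 0, 1, 1, 1, 1] ∘ₗ ψ) = LinearMap.trace ℝ V7 ψ := by
  refine ⟨skew_c2, jacobi_c2, diagL_mem_derivations_c2, fun ψ hψ => ?_⟩
  obtain ⟨h00, h22⟩ := apply_e_zero_zero_and_apply_e_two_two_of_mem_derivations_c2 hψ
  rw [trace_diagL_comp, trace_eq_sum_apply_e]
  simp [Fin.sum_univ_seven, h00, h22]
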